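/- (Matched pairwise error, degenerate case.) Let n ≥ 1, β ∈ [0,1), σ_c > 0. Let x_i, x_j ∈ ℝ^n with d = x_i − x_j ≠ 0 and δ = ‖d‖, and let t_i, t_j ∈ ℝ^n be unit vectors with ⟨d, t_i⟩ = 0, ⟨d, t_j⟩ = 0, and t_j = γ·t_i where γ ∈ {−1, +1}. For l ∈ {i, j} define the matched metric Λ_l(Y) = ‖Y − √(1−β)·x_l‖²/σ_c² − β·⟨Y − √(1−β)·x_l, t_l⟩²/(σ_c²(β+σ_c²)). Let ξ be a standard real Gaussian and N a random vector with i.i.d. centered Gaussian coordinates of variance σ_c², independent of ξ, and set Y = √(1−β)·x_i + √β·ξ·t_i + N. Then the probability of the event {Λ_j(Y) ≤ Λ_i(Y)} equals Q( √(1−β)·δ / (2σ_c) ). -/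

import Mathlib

open MeasureTheory ProbabilityTheory Real

/-- The standard Gaussian tail function `Q(x) = (1/√(2π)) ∫_x^∞ e^{−u²/2} du`. -/
noncomputable def gaussQ (x : ℝ) : ℝ :=
  (Real.sqrt (2 * Real.pi))⁻¹ * ∫ u in Set.Ioi x, Real.exp (-u ^ 2 / 2)

/-- The matched decoding metric
`Λ(Y) = ‖Y − √(1−β)x‖²/σc² − β⟨Y − √(1−β)x, t⟩²/(σc²(β+σc²))`. -/
noncomputable def matchedMetric {n : ℕ} (β σc : ℝ) (x t Y : EuclideanSpace ℝ (Fin n)) : ℝ :=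
  ‖Y - Real.sqrt (1 - β) • x‖ ^ 2 / σc ^ 2 -
    β * (inner ℝ (Y - Real.sqrt (1 - β) • x) t : ℝ) ^ 2 / (σc ^ 2 * (β + σc ^ 2))


/-! Because `t_j = ±t_i` is orthogonal to `d = x_i − x_j`, the pilot-projection terms of the two
matched metrics coincide at the received vector, so the matched decision is a minimum-distance
decision: `Λ_j(Y) ≤ Λ_i(Y)` iff `⟨d, N⟩ ≤ −√(1−β)‖d‖²/2`, an event that does not involve `ξ`.
The noise is `σc` times a standard Gaussian vector, so `⟨d, N⟩` is centered Gaussian with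
variance `σc²‖d‖²`, and the probability of the half-space is `Q(√(1−β)‖d‖/(2σc))`. -/

open scoped NNReal RealInnerProductSpace

theorem stdGaussian_map_inner {E : Type*} [NormedAddCommGroup E] [InnerProductSpace ℝ E]
    [FiniteDimensional ℝ E] [MeasurableSpace E] [BorelSpace E] (v : E) :
    (stdGaussian E).map (fun x ↦ ⟪v, x⟫) = gaussianReal 0 (‖v‖₊ ^ 2) := by
  have h := IsGaussian.map_eq_gaussianReal (μ := stdGaussian E) (innerSL ℝ v)
  rw [integral_strongDual_stdGaussian, variance_dual_stdGaussian, innerSL_apply_norm] at h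
  convert h using 2
  · ext x; simp
  · rw [← NNReal.coe_inj]; simp

theorem gaussianReal_zero_one_Ioi_toReal (x : ℝ) :
    (gaussianReal 0 1 (Set.Ioi x)).toReal = gaussQ x := by
  rw [gaussianReal_apply_eq_integral _ one_ne_zero, ENNReal.toReal_ofReal
    (setIntegral_nonneg measurableSet_Ioi fun _ _ ↦ gaussianPDFReal_nonneg _ _ _),
    gaussQ, ← integral_const_mul]
  simp [gaussianPDFReal]

theorem gaussianReal_Iic_eq_Ioi {v : ℝ≥0} (hv : v ≠ 0) (c : ℝ) :
    gaussianReal 0 v (Set.Iic c) = gaussianReal 0 1 (Set.Ioi (-c / √v)) := by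
  have hsv : 0 < √(v : ℝ) := Real.sqrt_pos.2 (by positivity)
  have hmap : (gaussianReal 0 1).map (fun x ↦ -√v * x) = gaussianReal 0 v := by
    rw [gaussianReal_map_const_mul, mul_zero, mul_one]
    congr 1; ext; simp [NNReal.coe_pos.mpr (pos_iff_ne_zero.mpr hv) |>.le]
  have := nullSingletonClass_gaussianReal (μ := 0) one_ne_zero
  rw [← hmap, Measure.map_apply (by fun_prop) measurableSet_Iic, measure_congr Ioi_ae_eq_Ici]
  congr 1
  ext x
  simp only [Set.mem_preimage, Set.mem_Iic, Set.mem_Ici, neg_mul, neg_le, div_le_iff₀ hsv,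
    mul_comm x]

theorem pi_gaussianReal_map_toLp {ι : Type*} [Fintype ι] (w : ℝ≥0) :
    (Measure.pi fun _ : ι ↦ gaussianReal 0 w).map (WithLp.toLp 2) =
      (stdGaussian (EuclideanSpace ℝ ι)).map (fun x ↦ √w • x) := by
  have h1 : gaussianReal 0 w = (gaussianReal 0 1).map (fun x ↦ √w * x) := by
    rw [gaussianReal_map_const_mul, mul_zero, mul_one]
    congr 1; ext; simp
  rw [← map_pi_eq_stdGaussian, Measure.map_map (by fun_prop) (by fun_prop), h1,
    ← Measure.pi_map_pi (fun _ ↦ by fun_prop), Measure.map_map (by fun_prop) (by fun_prop)]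
  rfl

theorem pi_gaussianReal_map_inner {ι : Type*} [Fintype ι] (w : ℝ≥0) (v : EuclideanSpace ℝ ι) :
    ((Measure.pi fun _ : ι ↦ gaussianReal 0 w).map (WithLp.toLp 2)).map (fun x ↦ ⟪v, x⟫) =
      gaussianReal 0 (w * ‖v‖₊ ^ 2) := by
  rw [pi_gaussianReal_map_toLp, Measure.map_map (by fun_prop) (by fun_prop)]
  have hcomp : (fun x ↦ ⟪v, x⟫) ∘ (fun x : EuclideanSpace ℝ ι ↦ √w • x) =
      (√w * ·) ∘ (fun x ↦ ⟪v, x⟫) := by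
    ext x; simp [real_inner_smul_right]
  rw [hcomp, ← Measure.map_map (by fun_prop) (by fun_prop), stdGaussian_map_inner,
    gaussianReal_map_const_mul, mul_zero]
  congr 1; ext; simp

theorem pi_gaussianReal_halfspace_toReal {ι : Type*} [Fintype ι] {w : ℝ≥0} (hw : w ≠ 0)
    {v : EuclideanSpace ℝ ι} (hv : v ≠ 0) (c : ℝ) :
    (((Measure.pi fun _ : ι ↦ gaussianReal 0 w).map (WithLp.toLp 2)) {x | ⟪v, x⟫ ≤ c}).toReal =
      gaussQ (-c / (√w * ‖v‖)) := by
  have hvar : w * ‖v‖₊ ^ 2 ≠ 0 := by simp [hw, hv]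
  have hset : {x | ⟪v, x⟫ ≤ c} = (fun x ↦ ⟪v, x⟫) ⁻¹' Set.Iic c := rfl
  rw [hset, ← Measure.map_apply (by fun_prop) measurableSet_Iic,
    pi_gaussianReal_map_inner, gaussianReal_Iic_eq_Ioi hvar, gaussianReal_zero_one_Ioi_toReal]
  congr 2
  simp [Real.sqrt_mul, Real.sqrt_sq]

theorem matchedMetric_le_matchedMetric_iff {n : ℕ} {β σc : ℝ} (hσ : σc ≠ 0)
    {x x' t t' Y : EuclideanSpace ℝ (Fin n)}
    (h : ⟪Y - √(1 - β) • x', t'⟫ ^ 2 = ⟪Y - √(1 - β) • x, t⟫ ^ 2) :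
    matchedMetric β σc x' t' Y ≤ matchedMetric β σc x t Y ↔
      ‖Y - √(1 - β) • x'‖ ≤ ‖Y - √(1 - β) • x‖ := by
  rw [matchedMetric, matchedMetric, h, sub_le_sub_iff_right,
    div_le_div_iff_of_pos_right (by positivity), sq_le_sq₀ (norm_nonneg _) (norm_nonneg _)]

theorem norm_add_smul_le_norm_iff {E : Type*} [NormedAddCommGroup E] [InnerProductSpace ℝ E]
    {s : ℝ} (hs : 0 < s) (z d : E) :
    ‖z + s • d‖ ≤ ‖z‖ ↔ ⟪d, z⟫ ≤ -(s * ‖d‖ ^ 2 / 2) := by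
  rw [← sq_le_sq₀ (norm_nonneg _) (norm_nonneg _), norm_add_sq_real, real_inner_smul_right,
    norm_smul, mul_pow, Real.norm_of_nonneg hs.le, real_inner_comm]
  constructor <;> intro h <;> nlinarith

theorem matchedMetric_phantom_le_iff {n : ℕ} {β σc γ : ℝ} (hβ : β < 1) (hσ : σc ≠ 0)
    (hγ : γ ^ 2 = 1) {xi xj t : EuclideanSpace ℝ (Fin n)} (horth : ⟪xi - xj, t⟫ = 0)
    (a : ℝ) (N : EuclideanSpace ℝ (Fin n)) :
    matchedMetric β σc xj (γ • t) (√(1 - β) • xi + a • t + N) ≤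
        matchedMetric β σc xi t (√(1 - β) • xi + a • t + N) ↔
      ⟪xi - xj, N⟫ ≤ -(√(1 - β) * ‖xi - xj‖ ^ 2 / 2) := by
  set s := √(1 - β)
  have hs : 0 < s := Real.sqrt_pos.2 (by linarith)
  have hZi : s • xi + a • t + N - s • xi = a • t + N := by abel
  have hZj : s • xi + a • t + N - s • xj = a • t + N + s • (xi - xj) := by rw [smul_sub]; abel
  have hproj : ⟪a • t + N + s • (xi - xj), γ • t⟫ ^ 2 = ⟪a • t + N, t⟫ ^ 2 := by
    rw [inner_add_left, real_inner_smul_right, real_inner_smul_right, real_inner_smul_left, horth]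
    linear_combination ⟪a • t + N, t⟫ ^ 2 * hγ
  have hN : ⟪xi - xj, a • t + N⟫ = ⟪xi - xj, N⟫ := by
    rw [inner_add_right, real_inner_smul_right, horth, mul_zero, zero_add]
  rw [matchedMetric_le_matchedMetric_iff hσ (by rwa [hZi, hZj]), hZi, hZj,
    norm_add_smul_le_norm_iff hs, hN]

theorem matched_pairwise_error_degenerate_general (n : ℕ) (β σc : ℝ)
    (hβ1 : β < 1) (hσ : 0 < σc)
    (xi xj ti tj : EuclideanSpace ℝ (Fin n)) (hd : xi - xj ≠ 0)
    (horthi : (inner ℝ (xi - xj) ti : ℝ) = 0)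
    (γ : ℝ) (hγ : γ = 1 ∨ γ = -1) (htij : tj = γ • ti) :
    (((gaussianReal 0 1).prod
        ((Measure.pi fun _ : Fin n => gaussianReal 0 ⟨σc ^ 2, sq_nonneg σc⟩ :
          Measure (Fin n → ℝ)).map (WithLp.toLp 2) : Measure (EuclideanSpace ℝ (Fin n))))
      {p : ℝ × EuclideanSpace ℝ (Fin n) |
        matchedMetric β σc xj tj
            (Real.sqrt (1 - β) • xi + (Real.sqrt β * p.1) • ti + p.2) ≤
          matchedMetric β σc xi ti
            (Real.sqrt (1 - β) • xi + (Real.sqrt β * p.1) • ti + p.2)}).toReal =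
      gaussQ (Real.sqrt (1 - β) * ‖xi - xj‖ / (2 * σc)) := by
  subst htij
  have hγ2 : γ ^ 2 = 1 := by rcases hγ with rfl | rfl <;> norm_num
  have hevent : {p : ℝ × EuclideanSpace ℝ (Fin n) |
      matchedMetric β σc xj (γ • ti) (√(1 - β) • xi + (√β * p.1) • ti + p.2) ≤
        matchedMetric β σc xi ti (√(1 - β) • xi + (√β * p.1) • ti + p.2)} =
      Set.univ ×ˢ {N | ⟪xi - xj, N⟫ ≤ -(√(1 - β) * ‖xi - xj‖ ^ 2 / 2)} := by
    ext ⟨a, N⟩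
    simpa using matchedMetric_phantom_le_iff hβ1 hσ.ne' hγ2 horthi (√β * a) N
  have hvar : (⟨σc ^ 2, sq_nonneg σc⟩ : ℝ≥0) ≠ 0 := by
    simpa [← NNReal.coe_ne_zero] using hσ.ne'
  -- The variance `⟨σc ^ 2, _⟩` elaborates to a bare `Subtype.mk`, which instance search and `rw`
  -- do not match against `ℝ≥0`; hence the explicit instance here and the `show` below.
  have (_ : Fin n) := instIsProbabilityMeasureGaussianReal 0 ⟨σc ^ 2, sq_nonneg σc⟩
  rw [hevent, Measure.prod_prod, measure_univ, one_mul,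
    pi_gaussianReal_halfspace_toReal hvar hd]
  have hδ : ‖xi - xj‖ ≠ 0 := norm_ne_zero_iff.2 hd
  congr 1
  show - -(√(1 - β) * ‖xi - xj‖ ^ 2 / 2) / (√(σc ^ 2) * ‖xi - xj‖) = _
  rw [Real.sqrt_sq hσ.le]
  field_simp

/-- matched pairwise error, degenerate case `γ ∈ {−1,+1}`: on a phantom
pair with `t_j = γ·t_i`, the matched pairwise error probability equals
`Q(√(1−β)δ/(2σc))`. -/
theorem matched_pairwise_error_degenerate (n : ℕ) (hn : 1 ≤ n) (β σc : ℝ)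
    (hβ0 : 0 ≤ β) (hβ1 : β < 1) (hσ : 0 < σc)
    (xi xj ti tj : EuclideanSpace ℝ (Fin n)) (hd : xi - xj ≠ 0)
    (hti : ‖ti‖ = 1) (htj : ‖tj‖ = 1)
    (horthi : (inner ℝ (xi - xj) ti : ℝ) = 0) (horthj : (inner ℝ (xi - xj) tj : ℝ) = 0)
    (γ : ℝ) (hγ : γ = 1 ∨ γ = -1) (htij : tj = γ • ti) :
    (((gaussianReal 0 1).prod
        ((Measure.pi fun _ : Fin n => gaussianReal 0 ⟨σc ^ 2, sq_nonneg σc⟩ :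
          Measure (Fin n → ℝ)).map (WithLp.toLp 2) : Measure (EuclideanSpace ℝ (Fin n))))
      {p : ℝ × EuclideanSpace ℝ (Fin n) |
        matchedMetric β σc xj tj
            (Real.sqrt (1 - β) • xi + (Real.sqrt β * p.1) • ti + p.2) ≤
          matchedMetric β σc xi ti
            (Real.sqrt (1 - β) • xi + (Real.sqrt β * p.1) • ti + p.2)}).toReal =
      gaussQ (Real.sqrt (1 - β) * ‖xi - xj‖ / (2 * σc)) :=
  matched_pairwise_error_degenerate_general n β σc hβ1 hσ xi xj ti tj hd horthi γ hγ htij
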